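/- arXiv:2605.18308 — 3 statements merged into one kernel-verified Lean document; each statement's English description precedes it below -/
import Mathlib

section
/- For all real p ∈ (1/2, 1), min{p/(1+2p), (−1+3p−p²)/(2(3p−1))} − min{p/3, 1−p} ≥ 1/40. -/
/-! The branches of `min (p / 3) (1 - p)` cross at `p = 3 / 4`, so each of the two terms is
compared with `p / 3` on `(1 / 2, 3 / 4]` and with `1 - p` on `[3 / 4, 1)`. Clearing the positive
denominators leaves quadratic inequalities; for the second term they read
`-3 (p - 3/4) (p - 19/45) ≥ 0` and `5 (p - 3/4) (p - 7/25) ≥ 0`, so `1 / 40` is attained at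
`p = 3 / 4`. -/

lemma min_div_three_one_sub_add_le {p ε f : ℝ} (hle : p ≤ 3 / 4 → p / 3 + ε ≤ f)
    (hge : 3 / 4 ≤ p → 1 - p + ε ≤ f) : min (p / 3) (1 - p) + ε ≤ f := by
  rcases le_total p (3 / 4) with hp | hp
  · linarith [min_le_left (p / 3) (1 - p), hle hp]
  · linarith [min_le_right (p / 3) (1 - p), hge hp]

theorem path4_vs_min (p : ℝ) (hp : p ∈ Set.Ioo (1 / 2 : ℝ) 1) :
    min (p / (1 + 2 * p)) ((-1 + 3 * p - p ^ 2) / (2 * (3 * p - 1))) - min (p / 3) (1 - p)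
      ≥ 1 / 40 := by
  obtain ⟨hp₁, hp₂⟩ := hp
  have hfirst : min (p / 3) (1 - p) + 1 / 40 ≤ p / (1 + 2 * p) := by
    apply min_div_three_one_sub_add_le <;> intro h <;> rw [le_div_iff₀ (by linarith)] <;>
      nlinarith
  have hsecond : min (p / 3) (1 - p) + 1 / 40 ≤ (-1 + 3 * p - p ^ 2) / (2 * (3 * p - 1)) := by
    apply min_div_three_one_sub_add_le <;> intro h <;> rw [le_div_iff₀ (by linarith)] <;>
      nlinarith [mul_nonneg (sub_nonneg.2 h) (sub_nonneg.2 hp₁.le)]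
  linarith [le_min hfirst hsecond]
end

section
/- Let t ≥ 1 be an integer and p ∈ (1/2, 1). Set g = p(1−p) + (2p−1)p²/(t + 2p − 1). If c and the common leaf weight x satisfy the system (1−p−g)/(1−p) + ((2p−1)/(1−p))·c = 1 − c and (1−p−g)/(1−p) + ((2p−1)/(1−p))·(1−c)/t = c, then c = (1 − (1−p−g)/(1−p))/(1 + (2p−1)/(1−p)) and the system is consistent; in particular g = p(1−p) + (2p−1)p²/(t+2p−1) is the unique solution of (1−p−g)/(1−p) = (t − P²)/(tP + 2t + P) where P = (2p−1)/(1−p). -/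
/-! With `P = (2p-1)/(1-p)` and `D = tP + 2t + P`, the stated `g` is exactly the value for which
`G = (1-p-g)/(1-p)` equals `(t - P²)/D`; for that `G` the star system is solved by `c = (t + P)/D`,
and its first equation alone already forces `c = (1 - G)/(1 + P)`. -/

lemma eq_div_of_add_mul_eq_one_sub {G P c : ℝ} (hP : 1 + P ≠ 0) (h : G + P * c = 1 - c) :
    c = (1 - G) / (1 + P) := by
  rw [eq_div_iff hP]
  linear_combination h

lemma star_system_solution {t P : ℝ} (ht : t ≠ 0) (hD : t * P + 2 * t + P ≠ 0) :
    (t - P ^ 2) / (t * P + 2 * t + P) + P * ((t + P) / (t * P + 2 * t + P))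
        = 1 - (t + P) / (t * P + 2 * t + P) ∧
      (t - P ^ 2) / (t * P + 2 * t + P) + P * ((1 - (t + P) / (t * P + 2 * t + P)) / t)
        = (t + P) / (t * P + 2 * t + P) := by
  generalize hD_def : t * P + 2 * t + P = D at hD ⊢
  constructor
  · field_simp
    linear_combination hD_def
  · field_simp
    linear_combination -P * hD_def

lemma star_g_function_identity {t p : ℝ} (hp : p ≠ 1) (htp : t + 2 * p - 1 ≠ 0) :
    (1 - p - (p * (1 - p) + (2 * p - 1) * p ^ 2 / (t + 2 * p - 1))) / (1 - p)
      = (t - ((2 * p - 1) / (1 - p)) ^ 2)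
          / (t * ((2 * p - 1) / (1 - p)) + 2 * t + (2 * p - 1) / (1 - p)) := by
  have h1p : 1 - p ≠ 0 := sub_ne_zero.mpr hp.symm
  have hD : t * ((2 * p - 1) / (1 - p)) + 2 * t + (2 * p - 1) / (1 - p)
      = (t + 2 * p - 1) / (1 - p) := by
    field_simp
    ring
  rw [hD, div_div_eq_mul_div, eq_div_iff htp, div_mul_eq_mul_div, sub_mul, add_mul,
    div_mul_cancel₀ _ htp]
  field_simp
  ring

theorem star_g_function (t : ℕ) (ht : 1 ≤ t) (p : ℝ) (hp : p ∈ Set.Ioo (1 / 2 : ℝ) 1) :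
    let P : ℝ := (2 * p - 1) / (1 - p)
    let g : ℝ := p * (1 - p) + (2 * p - 1) * p ^ 2 / ((t : ℝ) + 2 * p - 1)
    let G : ℝ := (1 - p - g) / (1 - p)
    (∀ c : ℝ, (G + P * c = 1 - c ∧ G + P * ((1 - c) / (t : ℝ)) = c) →
        c = (1 - G) / (1 + P)) ∧
    (∃ c : ℝ, G + P * c = 1 - c ∧ G + P * ((1 - c) / (t : ℝ)) = c) ∧
    (∀ g' : ℝ, (1 - p - g') / (1 - p)
        = ((t : ℝ) - P ^ 2) / ((t : ℝ) * P + 2 * (t : ℝ) + P) ↔ g' = g) := by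
  intro P g G
  obtain ⟨hp_gt, hp_lt⟩ := hp
  have ht_pos : (0 : ℝ) < t := by exact_mod_cast ht
  have hP_pos : 0 < P := div_pos (by linarith) (by linarith)
  have hG : G = (t - P ^ 2) / (t * P + 2 * t + P) :=
    star_g_function_identity hp_lt.ne (by linarith)
  refine ⟨fun c hc => eq_div_of_add_mul_eq_one_sub (by positivity) hc.1,
    ⟨(t + P) / (t * P + 2 * t + P), ?_⟩, fun g' => ?_⟩
  · rw [hG]
    exact star_system_solution ht_pos.ne' (by positivity)
  · rw [← hG, div_left_inj' (sub_ne_zero.mpr hp_lt.ne'), sub_right_inj]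
end

section
/- For every integer t ≥ 1, every integer t' with 1 ≤ t' ≤ t, and every real p ∈ (1/2, 1): [p(1−p) + (2p−1)p²/(t+2p−1)] − [1−p + (2p−1)/t'] < 0. -/
/- Write `q = 2p - 1 > 0`. The difference equals `-(1 - p)² + (q p² / (t + q) - q / t')`, and the
bracket is negative because `p² ≤ 1` and `t' ≤ t < t + q`. -/

theorem mul_div_add_lt_div {a q s t : ℝ} (ha : a ≤ 1) (hq : 0 < q) (hs : 0 < s) (hst : s ≤ t) :
    q * a / (t + q) < q / s :=
  calc q * a / (t + q) ≤ q / (t + q) := by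
        gcongr
        · linarith
        · exact mul_le_of_le_one_right hq.le ha
    _ < q / s := by gcongr; linarith

theorem star_vs_subCRG_general (t : ℕ) (t' : ℕ) (ht'1 : 1 ≤ t') (ht't : t' ≤ t)
    (p : ℝ) (hp : p ∈ Set.Ioo (1 / 2 : ℝ) 1) :
    (p * (1 - p) + (2 * p - 1) * p ^ 2 / ((t : ℝ) + 2 * p - 1))
      - (1 - p + (2 * p - 1) / (t' : ℝ)) < 0 := by
  obtain ⟨hp_gt, hp_lt⟩ := hp
  have hsq : p ^ 2 ≤ 1 := by nlinarith
  have hbracket : (2 * p - 1) * p ^ 2 / ((t : ℝ) + 2 * p - 1) < (2 * p - 1) / (t' : ℝ) := by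
    rw [add_sub_assoc]
    exact mul_div_add_lt_div hsq (by linarith) (by exact_mod_cast ht'1) (by exact_mod_cast ht't)
  have hsplit : p * (1 - p) - (1 - p) = -(1 - p) ^ 2 := by ring
  linarith [sq_nonneg (1 - p)]

theorem star_vs_subCRG (t : ℕ) (ht : 1 ≤ t) (t' : ℕ) (ht'1 : 1 ≤ t') (ht't : t' ≤ t)
    (p : ℝ) (hp : p ∈ Set.Ioo (1 / 2 : ℝ) 1) :
    (p * (1 - p) + (2 * p - 1) * p ^ 2 / ((t : ℝ) + 2 * p - 1))
      - (1 - p + (2 * p - 1) / (t' : ℝ)) < 0 :=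
  star_vs_subCRG_general t t' ht'1 ht't p hp
end
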